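/- Let (γ, λ) ∈ D with γ > 0, so that x³ − x − λ has three distinct real roots α_min < α_c < α_max. Set z₀ = √((1−γ)/3) and g(x) = (2/γ)(x³ − (1−γ)x − λ). Then: (i) α_max ≤ 2z₀ and −α_min ≤ 2z₀; (ii) every x ∈ (−∞, −z₀] with 2α_min ≤ g(x) ≤ 2α_max satisfies α_min ≤ x ≤ α_min + √γ; (iii) every x ∈ [−z₀, z₀] with 2α_min ≤ g(x) ≤ 2α_max satisfies |x − α_c| ≤ √γ; (iv) every x ∈ [z₀, ∞) with 2α_min ≤ g(x) ≤ 2α_max satisfies α_max − √γ ≤ x ≤ α_max. -/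

import Mathlib

/-!
Write `γ = s²` and `1 - γ = 3z²`, and let `a < b < c` be the roots. For a root `r` with
partners `p, q` one has `(γ/2)(g x - 2r) = (x - r)((x - p)(x - q) + γ)`, so on each
monotonicity interval the two conditions `2a ≤ g x ≤ 2c` confine `x` as soon as the roots are
located relative to `±z` and `±z ± s`. The condition `(γ, λ) ∈ D`, with `c, -a ≤ α̂`, gives
`(c - 2z)(c + z)² = λ + γc - 2z³ ≤ 0`, hence `c ≤ 2z`, and likewise `-a ≤ 2z`. Then the
relation `a² + ac + c² = 1` turns `(a + 2z)(a + c - 2z) ≤ 0` into `s² ≤ (c - z)²`, and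
`b² + bc + c² = 1` turns `(c + 2z)(b + c - 2z) ≤ 0` into `s² ≤ (b - z)²`. The mirror bounds
come from the symmetry `λ ↦ -λ`, `(a, b, c) ↦ (-c, -b, -a)`.
-/

open Real

lemma sq_add_mul_add_sq_eq_one_of_cube_sub_eq {u v : ℝ} (huv : u ≠ v)
    (h : u ^ 3 - u = v ^ 3 - v) : u ^ 2 + u * v + v ^ 2 = 1 :=
  mul_left_cancel₀ (sub_ne_zero.2 huv) (by linear_combination h)

lemma two_div_mul_rpow_three_halves {t : ℝ} (ht : 0 ≤ t) :
    2 / (3 * √3) * t ^ ((3 : ℝ) / 2) = 2 * √(t / 3) ^ 3 := by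
  rw [show (3 : ℝ) / 2 = 1 + 1 / 2 by norm_num, rpow_add' ht (by norm_num), rpow_one,
    ← sqrt_eq_rpow, sqrt_div' t (by norm_num : (0 : ℝ) ≤ 3)]
  have h33 : √3 ^ 3 = 3 * √3 := by rw [pow_succ, sq_sqrt (by norm_num)]
  rw [div_pow, h33, pow_succ, sq_sqrt ht]
  field_simp

structure IsRootTriple (lam a b c : ℝ) : Prop where
  lt_mid : a < b
  mid_lt : b < c
  root_min : a ^ 3 - a = lam
  root_mid : b ^ 3 - b = lam
  root_max : c ^ 3 - c = lam

noncomputable def horseshoeMap (γ lam x : ℝ) : ℝ := 2 / γ * (x ^ 3 - (1 - γ) * x - lam)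

namespace IsRootTriple

variable {lam a b c : ℝ}

protected lemma neg (h : IsRootTriple lam a b c) : IsRootTriple (-lam) (-c) (-b) (-a) where
  lt_mid := neg_lt_neg h.mid_lt
  mid_lt := neg_lt_neg h.lt_mid
  root_min := by linear_combination -h.root_max
  root_mid := by linear_combination -h.root_mid
  root_max := by linear_combination -h.root_min

lemma min_lt_max (h : IsRootTriple lam a b c) : a < c := h.lt_mid.trans h.mid_lt

lemma sq_add_mul_add_sq_min_mid (h : IsRootTriple lam a b c) : a ^ 2 + a * b + b ^ 2 = 1 :=
  sq_add_mul_add_sq_eq_one_of_cube_sub_eq h.lt_mid.ne (h.root_min.trans h.root_mid.symm)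

lemma sq_add_mul_add_sq_min_max (h : IsRootTriple lam a b c) : a ^ 2 + a * c + c ^ 2 = 1 :=
  sq_add_mul_add_sq_eq_one_of_cube_sub_eq h.min_lt_max.ne (h.root_min.trans h.root_max.symm)

lemma sq_add_mul_add_sq_mid_max (h : IsRootTriple lam a b c) : b ^ 2 + b * c + c ^ 2 = 1 :=
  sq_add_mul_add_sq_eq_one_of_cube_sub_eq h.mid_lt.ne (h.root_mid.trans h.root_max.symm)

lemma add_add_eq_zero (h : IsRootTriple lam a b c) : a + b + c = 0 := by
  refine (mul_eq_zero.1 ?_).resolve_left (sub_ne_zero.2 h.min_lt_max.ne)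
  linear_combination h.sq_add_mul_add_sq_min_mid - h.sq_add_mul_add_sq_mid_max

lemma cube_sub_sub_eq_mul (h : IsRootTriple lam a b c) (x : ℝ) :
    x ^ 3 - x - lam = (x - a) * (x - b) * (x - c) := by
  linear_combination (x ^ 2 - (a + c) * x + b * (a + c - b)) * h.add_add_eq_zero
    + (x - b) * h.sq_add_mul_add_sq_min_max + h.root_mid

lemma three_mul_sq_mid_lt_one (h : IsRootTriple lam a b c) : 3 * b ^ 2 < 1 := by
  have hderiv : (b - a) * (b - c) = 3 * b ^ 2 - 1 := by
    linear_combination (a + c - 2 * b) * h.add_add_eq_zero - h.sq_add_mul_add_sq_min_max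
  linarith [mul_neg_of_pos_of_neg (sub_pos.2 h.lt_mid) (sub_neg.2 h.mid_lt)]

lemma one_lt_three_mul_sq_max (h : IsRootTriple lam a b c) : 1 < 3 * c ^ 2 := by
  have hderiv : (c - a) * (c - b) = 3 * c ^ 2 - 1 := by
    linear_combination (a + b - 2 * c) * h.add_add_eq_zero - h.sq_add_mul_add_sq_min_mid
  linarith [mul_pos (sub_pos.2 h.min_lt_max) (sub_pos.2 h.mid_lt)]

lemma max_pos (h : IsRootTriple lam a b c) : 0 < c := by
  linarith [h.add_add_eq_zero, h.lt_mid, h.mid_lt]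

lemma lt_max {z : ℝ} (h : IsRootTriple lam a b c) (hz : 3 * z ^ 2 ≤ 1) : z < c :=
  lt_of_pow_lt_pow_left₀ 2 h.max_pos.le (by linarith [h.one_lt_three_mul_sq_max])

lemma mid_nonpos (h : IsRootTriple lam a b c) (hlam : 0 ≤ lam) : b ≤ 0 := by
  nlinarith [h.three_mul_sq_mid_lt_one, h.root_mid]

lemma max_le_of_isGreatest_of_nonneg {α : ℝ} (h : IsRootTriple lam a b c) (hlam : 0 ≤ lam)
    (hα : IsGreatest {ξ : ℝ | ξ ^ 3 - ξ = lam} α) : c ≤ α ∧ -a ≤ α := by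
  have hc : c ≤ α := hα.2 h.root_max
  exact ⟨hc, by linarith [h.add_add_eq_zero, h.mid_nonpos hlam]⟩

lemma max_le_of_isGreatest {α : ℝ} (h : IsRootTriple lam a b c)
    (hα : IsGreatest {ξ : ℝ | ξ ^ 3 - ξ = |lam|} α) : c ≤ α ∧ -a ≤ α := by
  rcases le_total 0 lam with hlam | hlam
  · rw [abs_of_nonneg hlam] at hα
    exact h.max_le_of_isGreatest_of_nonneg hlam hα
  · rw [abs_of_nonpos hlam] at hα
    have := h.neg.max_le_of_isGreatest_of_nonneg (neg_nonneg.2 hlam) hα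
    rw [neg_neg] at this
    exact this.symm

lemma max_le_two_mul {z s : ℝ} (h : IsRootTriple lam a b c) (hz : 0 ≤ z)
    (hzs : 3 * z ^ 2 + s ^ 2 = 1) (hD : lam + s ^ 2 * c ≤ 2 * z ^ 3) : c ≤ 2 * z := by
  have hfactor : (c - 2 * z) * (c + z) ^ 2 = lam + s ^ 2 * c - 2 * z ^ 3 := by
    linear_combination h.root_max - c * hzs
  have hcz : 0 < (c + z) ^ 2 := by have := h.max_pos; positivity
  linarith [nonpos_of_mul_nonpos_left (hfactor ▸ sub_nonpos.2 hD) hcz]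

lemma add_le_max {z s : ℝ} (h : IsRootTriple lam a b c) (hz : 1 / 2 ≤ z)
    (hzs : 3 * z ^ 2 + s ^ 2 = 1) (ha : -a ≤ 2 * z) : z + s ≤ c := by
  have hb : -1 < b := by nlinarith [h.three_mul_sq_mid_lt_one]
  have hfactor : (a + 2 * z) * (a + c - 2 * z) = s ^ 2 - (c - z) ^ 2 := by
    linear_combination h.sq_add_mul_add_sq_min_max - hzs
  have hneg : (a + 2 * z) * (a + c - 2 * z) ≤ 0 :=
    mul_nonpos_of_nonneg_of_nonpos (by linarith) (by linarith [h.add_add_eq_zero])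
  have hcz : 0 ≤ c - z := sub_nonneg.2 (h.lt_max (by nlinarith)).le
  linarith [le_of_pow_le_pow_left₀ two_ne_zero hcz (by linarith : s ^ 2 ≤ (c - z) ^ 2)]

lemma mid_le_sub {z s : ℝ} (h : IsRootTriple lam a b c) (hz : 0 ≤ z) (hs : 0 < s)
    (hzs : 3 * z ^ 2 + s ^ 2 = 1) (ha : -a ≤ 2 * z) : b ≤ z - s := by
  have hfactor : (c + 2 * z) * (b + c - 2 * z) = s ^ 2 - (b - z) ^ 2 := by
    linear_combination h.sq_add_mul_add_sq_mid_max - hzs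
  have hneg : (c + 2 * z) * (b + c - 2 * z) ≤ 0 :=
    mul_nonpos_of_nonneg_of_nonpos (by linarith [h.max_pos])
      (by linarith [h.add_add_eq_zero])
  have hbzs : |b| < z + s := abs_lt_of_sq_lt_sq
    (by nlinarith [h.three_mul_sq_mid_lt_one, mul_pos hs hs]) (by linarith)
  by_contra! hb
  have : (b - z) ^ 2 < s ^ 2 := sq_lt_sq' (by linarith) (by linarith [le_abs_self b])
  linarith

variable {γ x : ℝ}

lemma horseshoeMap_sub_two_mul_min (h : IsRootTriple lam a b c) (hγ : γ ≠ 0) :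
    horseshoeMap γ lam x - 2 * a = 2 / γ * ((x - a) * ((x - b) * (x - c) + γ)) := by
  have := h.cube_sub_sub_eq_mul x
  unfold horseshoeMap
  field_simp
  linear_combination this

lemma two_mul_max_sub_horseshoeMap (h : IsRootTriple lam a b c) (hγ : γ ≠ 0) :
    2 * c - horseshoeMap γ lam x = 2 / γ * ((c - x) * ((x - a) * (x - b) + γ)) := by
  have := h.cube_sub_sub_eq_mul x
  unfold horseshoeMap
  field_simp
  linear_combination -this

lemma two_mul_min_le_horseshoeMap_iff (h : IsRootTriple lam a b c) (hγ : 0 < γ) :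
    2 * a ≤ horseshoeMap γ lam x ↔ 0 ≤ (x - a) * ((x - b) * (x - c) + γ) := by
  rw [← sub_nonneg, h.horseshoeMap_sub_two_mul_min hγ.ne',
    mul_nonneg_iff_of_pos_left (by positivity)]

lemma horseshoeMap_le_two_mul_max_iff (h : IsRootTriple lam a b c) (hγ : 0 < γ) :
    horseshoeMap γ lam x ≤ 2 * c ↔ 0 ≤ (c - x) * ((x - a) * (x - b) + γ) := by
  rw [← sub_nonneg, h.two_mul_max_sub_horseshoeMap hγ.ne',
    mul_nonneg_iff_of_pos_left (by positivity)]

variable {s : ℝ}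

lemma min_le_and_le_min_add (h : IsRootTriple lam a b c) (hs : 0 < s) (hxc : x < c)
    (hxb : x + s ≤ b) (hg₁ : 2 * a ≤ horseshoeMap (s ^ 2) lam x)
    (hg₂ : horseshoeMap (s ^ 2) lam x ≤ 2 * c) : a ≤ x ∧ x ≤ a + s := by
  rw [h.two_mul_min_le_horseshoeMap_iff (by positivity)] at hg₁
  rw [h.horseshoeMap_le_two_mul_max_iff (by positivity)] at hg₂
  constructor
  · by_contra! hxa
    have : 0 < (x - b) * (x - c) := mul_pos_of_neg_of_neg (by linarith) (by linarith)
    exact hg₁.not_gt (mul_neg_of_neg_of_pos (by linarith) (by positivity))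
  · by_contra! hxa
    have : s ^ 2 < (x - a) * (b - x) := by nlinarith
    exact hg₂.not_gt (mul_neg_of_pos_of_neg (by linarith) (by linarith))

lemma max_sub_le_and_le_max (h : IsRootTriple lam a b c) (hs : 0 < s) (hax : a < x)
    (hbx : b + s ≤ x) (hg₁ : 2 * a ≤ horseshoeMap (s ^ 2) lam x)
    (hg₂ : horseshoeMap (s ^ 2) lam x ≤ 2 * c) : c - s ≤ x ∧ x ≤ c := by
  rw [h.two_mul_min_le_horseshoeMap_iff (by positivity)] at hg₁
  rw [h.horseshoeMap_le_two_mul_max_iff (by positivity)] at hg₂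
  constructor
  · by_contra! hxc
    have : s ^ 2 < (x - b) * (c - x) := by nlinarith
    exact hg₁.not_gt (mul_neg_of_pos_of_neg (by linarith) (by linarith))
  · by_contra! hxc
    have : 0 < (x - a) * (x - b) := mul_pos (by linarith) (by linarith)
    exact hg₂.not_gt (mul_neg_of_neg_of_pos (by linarith) (by positivity))

lemma abs_sub_mid_le (h : IsRootTriple lam a b c) (hs : 0 < s) (hax : a + s ≤ x)
    (hxc : x + s ≤ c) (hg₁ : 2 * a ≤ horseshoeMap (s ^ 2) lam x)
    (hg₂ : horseshoeMap (s ^ 2) lam x ≤ 2 * c) : |x - b| ≤ s := by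
  rw [h.two_mul_min_le_horseshoeMap_iff (by positivity)] at hg₁
  rw [h.horseshoeMap_le_two_mul_max_iff (by positivity)] at hg₂
  rw [abs_le]
  constructor
  · by_contra! hxb
    have : s ^ 2 < (x - a) * (b - x) := by nlinarith
    exact hg₂.not_gt (mul_neg_of_pos_of_neg (by linarith) (by linarith))
  · by_contra! hxb
    have : s ^ 2 < (x - b) * (c - x) := by nlinarith
    exact hg₁.not_gt (mul_neg_of_pos_of_neg (by linarith) (by linarith))

end IsRootTriple

theorem stmt_5 (γ lam : ℝ) (hγpos : 0 < γ) (hγ : γ ≤ 1 / 4)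
    (αhat : ℝ) (hαhat : IsGreatest {ξ : ℝ | ξ ^ 3 - ξ = |lam|} αhat)
    (hD : |lam| + γ * αhat ≤ 2 / (3 * Real.sqrt 3) * (1 - γ) ^ ((3 : ℝ) / 2))
    (αmin αc αmax : ℝ) (h1 : αmin < αc) (h2 : αc < αmax)
    (hrmin : αmin ^ 3 - αmin = lam) (hrc : αc ^ 3 - αc = lam)
    (hrmax : αmax ^ 3 - αmax = lam) :
    (αmax ≤ 2 * Real.sqrt ((1 - γ) / 3) ∧ -αmin ≤ 2 * Real.sqrt ((1 - γ) / 3)) ∧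
    (∀ x : ℝ, x ≤ -Real.sqrt ((1 - γ) / 3) →
      2 * αmin ≤ (2 / γ) * (x ^ 3 - (1 - γ) * x - lam) →
      (2 / γ) * (x ^ 3 - (1 - γ) * x - lam) ≤ 2 * αmax →
      αmin ≤ x ∧ x ≤ αmin + Real.sqrt γ) ∧
    (∀ x : ℝ, -Real.sqrt ((1 - γ) / 3) ≤ x → x ≤ Real.sqrt ((1 - γ) / 3) →
      2 * αmin ≤ (2 / γ) * (x ^ 3 - (1 - γ) * x - lam) →
      (2 / γ) * (x ^ 3 - (1 - γ) * x - lam) ≤ 2 * αmax →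
      |x - αc| ≤ Real.sqrt γ) ∧
    (∀ x : ℝ, Real.sqrt ((1 - γ) / 3) ≤ x →
      2 * αmin ≤ (2 / γ) * (x ^ 3 - (1 - γ) * x - lam) →
      (2 / γ) * (x ^ 3 - (1 - γ) * x - lam) ≤ 2 * αmax →
      αmax - Real.sqrt γ ≤ x ∧ x ≤ αmax) := by
  obtain ⟨s, hs, rfl⟩ : ∃ s, 0 < s ∧ s ^ 2 = γ := ⟨√γ, sqrt_pos.2 hγpos, sq_sqrt hγpos.le⟩
  rw [sqrt_sq hs.le]
  rw [two_div_mul_rpow_three_halves (by linarith)] at hD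
  set z := √((1 - s ^ 2) / 3)
  have hzs : 3 * z ^ 2 + s ^ 2 = 1 := by rw [sq_sqrt (by linarith)]; ring
  have hz : 1 / 2 ≤ z := (le_sqrt (by norm_num) (by linarith)).2 (by linarith)
  have hr : IsRootTriple lam αmin αc αmax := ⟨h1, h2, hrmin, hrc, hrmax⟩
  obtain ⟨hmax, hmin⟩ := hr.max_le_of_isGreatest hαhat
  have hmax_le : αmax ≤ 2 * z := hr.max_le_two_mul (by linarith) hzs
    (by linarith [le_abs_self lam, mul_le_mul_of_nonneg_left hmax (sq_nonneg s)])
  have hmin_le : -αmin ≤ 2 * z := by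
    have := hr.neg.max_le_two_mul (by linarith) hzs
      (by linarith [neg_le_abs lam, mul_le_mul_of_nonneg_left hmin (sq_nonneg s)])
    linarith
  have hmax_ge : z + s ≤ αmax := hr.add_le_max hz hzs hmin_le
  have hmin_ge : z + s ≤ -αmin := hr.neg.add_le_max hz hzs (by linarith)
  have hmid_le : αc ≤ z - s := hr.mid_le_sub (by linarith) hs hzs hmin_le
  have hmid_ge : -αc ≤ z - s := hr.neg.mid_le_sub (by linarith) hs hzs (by linarith)
  refine ⟨⟨hmax_le, hmin_le⟩, fun x hx hg₁ hg₂ => ?_, fun x hx₁ hx₂ hg₁ hg₂ => ?_,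
    fun x hx hg₁ hg₂ => ?_⟩
  · exact hr.min_le_and_le_min_add hs (by linarith) (by linarith) hg₁ hg₂
  · exact hr.abs_sub_mid_le hs (by linarith) (by linarith) hg₁ hg₂
  · exact hr.max_sub_le_and_le_max hs (by linarith) (by linarith) hg₁ hg₂
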